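/- arXiv:1908.06703 — 3 statements merged into one kernel-verified Lean document; each statement's English description precedes it below -/
import Mathlib

section
/- Let φ_H : [0,∞) → [0,∞) be integrable with ‖φ_H‖_{L¹} < 1 and resolvent R_H. If ∫₀^∞ s^κ φ_H(s) ds < ∞ for some κ ∈ (0,1), then ∫₀^∞ s^κ R_H(s) ds ≤ (∫₀^∞ s^κ φ_H(s) ds) / (1 − ‖φ_H‖_{L¹})². -/
open MeasureTheory Set Filter
open scoped ENNReal

namespace Stmt2Aux

noncomputable def K (f g : ℝ → ℝ≥0∞) : ℝ → ℝ → ℝ≥0∞ := fun t s =>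
  ({p : ℝ × ℝ | 0 < p.2 ∧ p.2 ≤ p.1}).indicator (fun p => f (p.1 - p.2) * g p.2) (t, s)

lemma measurable_uncurry_K (f g : ℝ → ℝ≥0∞) (hf : Measurable f) (hg : Measurable g) :
    Measurable (Function.uncurry (K f g)) := by
  have hset : MeasurableSet {p : ℝ × ℝ | 0 < p.2 ∧ p.2 ≤ p.1} :=
    (measurableSet_lt measurable_const measurable_snd).inter
      (measurableSet_le measurable_snd measurable_fst)
  exact Measurable.indicator
    ((hf.comp (measurable_fst.sub measurable_snd)).mul (hg.comp measurable_snd)) hset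

lemma K_lintegral (f g : ℝ → ℝ≥0∞) (t : ℝ) :
    ∫⁻ s in Ioc 0 t, f (t - s) * g s = ∫⁻ s, K f g t s := by
  rw [← lintegral_indicator measurableSet_Ioc]
  exact lintegral_congr fun s => by
    simp only [K, Set.indicator_apply, Set.mem_Ioc, Set.mem_setOf_eq]

lemma conv_measurable (f g : ℝ → ℝ≥0∞) (hf : Measurable f) (hg : Measurable g) :
    Measurable (fun t => ∫⁻ s in Ioc 0 t, f (t - s) * g s) := by
  simp_rw [K_lintegral f g]
  exact (measurable_uncurry_K f g hf hg).lintegral_prod_right'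

lemma ae_ne_zero : ∀ᵐ u : ℝ, u ≠ 0 := by
  rw [ae_iff]
  simp only [ne_eq, not_not, Set.setOf_eq_eq_singleton]
  exact Real.volume_singleton

lemma conv_le (f g : ℝ → ℝ≥0∞) (hf : Measurable f) (hg : Measurable g) (T : ℝ) :
    ∫⁻ t in Ioc 0 T, ∫⁻ s in Ioc 0 t, f (t - s) * g s ≤
      (∫⁻ u in Ioc 0 T, f u) * ∫⁻ s in Ioi 0, g s := by
  have hK := measurable_uncurry_K f g hf hg
  have swap : ∫⁻ t in Ioc 0 T, ∫⁻ s in Ioc 0 t, f (t - s) * g s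
      = ∫⁻ s, ∫⁻ t in Ioc 0 T, K f g t s := by
    rw [lintegral_congr fun t => K_lintegral f g t]
    exact lintegral_lintegral_swap hK.aemeasurable
  rw [swap]
  have step : ∀ s : ℝ, (∫⁻ t in Ioc 0 T, K f g t s)
      ≤ (Ioi (0:ℝ)).indicator (fun s => g s * ∫⁻ u in Ioc 0 T, f u) s := by
    intro s
    by_cases hs : 0 < s
    · have h1 : ∀ t, K f g t s = (Ici s).indicator (fun t => f (t - s)) t * g s := by
        intro t
        simp only [K, Set.indicator_apply, Set.mem_setOf_eq, Set.mem_Ici]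
        by_cases hts : s ≤ t <;> simp [hts, hs]
      have h2 : (∫⁻ t in Ioc 0 T, K f g t s)
          = (∫⁻ t in Ioc 0 T, (Ici s).indicator (fun t => f (t - s)) t) * g s := by
        simp_rw [h1]
        exact lintegral_mul_const _
          ((hf.comp (measurable_id.sub measurable_const)).indicator measurableSet_Ici)
      have h4 : ∀ u : ℝ, (Ioc 0 T).indicator ((Ici s).indicator (fun t => f (t - s))) (u + s)
          ≤ (Icc 0 (T - s)).indicator f u := by
        intro u
        by_cases hc : u + s ∈ Ioc 0 T
        · rw [Set.indicator_of_mem hc]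
          by_cases hu : (0:ℝ) ≤ u
          · have hmem : u + s ∈ Ici s := by
              simp only [Set.mem_Ici, le_add_iff_nonneg_left]; exact hu
            rw [Set.indicator_of_mem hmem]
            have hmem2 : u ∈ Icc 0 (T - s) := ⟨hu, by
              have := hc.2; linarith⟩
            rw [Set.indicator_of_mem hmem2, add_sub_cancel_right]
          · have hmem : u + s ∉ Ici s := by
              simp only [Set.mem_Ici, le_add_iff_nonneg_left]; exact hu
            rw [Set.indicator_of_notMem hmem]
            exact zero_le
        · rw [Set.indicator_of_notMem hc]
          exact zero_le
      have h3 : (∫⁻ t in Ioc 0 T, (Ici s).indicator (fun t => f (t - s)) t)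
          ≤ ∫⁻ u in Ioc 0 T, f u := by
        rw [← lintegral_indicator measurableSet_Ioc, ← lintegral_add_right_eq_self
          (fun t => (Ioc 0 T).indicator ((Ici s).indicator (fun t => f (t - s))) t) s]
        refine le_trans (lintegral_mono h4) ?_
        rw [lintegral_indicator measurableSet_Icc]
        refine lintegral_mono_set' ?_
        filter_upwards [ae_ne_zero] with u hu humem
        exact ⟨lt_of_le_of_ne humem.1 (Ne.symm hu), by linarith [humem.2, hs]⟩
      rw [Set.indicator_of_mem (Set.mem_Ioi.mpr hs), h2, mul_comm (g s)]
      exact mul_le_mul_left h3 _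
    · have h0 : ∀ t, K f g t s = 0 := by
        intro t
        simp [K, Set.indicator_apply, Set.mem_setOf_eq, hs]
      rw [Set.indicator_of_notMem (by simpa [Set.mem_Ioi] using hs)]
      simp [h0]
  calc ∫⁻ s, ∫⁻ t in Ioc 0 T, K f g t s
      ≤ ∫⁻ s, (Ioi (0:ℝ)).indicator (fun s => g s * ∫⁻ u in Ioc 0 T, f u) s :=
        lintegral_mono step
    _ = ∫⁻ s in Ioi (0:ℝ), g s * ∫⁻ u in Ioc 0 T, f u :=
        lintegral_indicator measurableSet_Ioi _
    _ = (∫⁻ s in Ioi (0:ℝ), g s) * ∫⁻ u in Ioc 0 T, f u := lintegral_mul_const _ hg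
    _ = (∫⁻ u in Ioc 0 T, f u) * ∫⁻ s in Ioi (0:ℝ), g s := mul_comm _ _

lemma sup_Ioc (h : ℝ → ℝ≥0∞) (hh : Measurable h) :
    ∫⁻ t in Ioi (0:ℝ), h t = ⨆ n : ℕ, ∫⁻ t in Ioc (0:ℝ) (n:ℝ), h t := by
  have hmono : Monotone (fun n : ℕ => (Ioc (0:ℝ) (n:ℝ)).indicator h) := fun m n hmn =>
    Set.indicator_le_indicator_of_subset (Ioc_subset_Ioc_right (by exact_mod_cast hmn))
      (fun x => zero_le)
  have hpt : ∀ x, (Ioi (0:ℝ)).indicator h x = ⨆ n : ℕ, (Ioc (0:ℝ) (n:ℝ)).indicator h x := by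
    intro x
    by_cases hx : 0 < x
    · obtain ⟨n, hn⟩ := exists_nat_ge x
      refine le_antisymm ?_ (iSup_le fun m => ?_)
      · rw [Set.indicator_of_mem (Set.mem_Ioi.mpr hx)]
        refine le_trans ?_ (le_iSup _ n)
        rw [Set.indicator_of_mem (show x ∈ Ioc (0:ℝ) (n:ℝ) from ⟨hx, hn⟩)]
      · rw [Set.indicator_of_mem (Set.mem_Ioi.mpr hx)]
        exact Set.indicator_le_self' (fun a _ => zero_le) x
    · simp [Set.indicator_apply, Set.mem_Ioi, Set.mem_Ioc, hx]
  rw [← lintegral_indicator measurableSet_Ioi]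
  rw [lintegral_congr hpt, lintegral_iSup (fun n => hh.indicator measurableSet_Ioc) hmono]
  simp_rw [lintegral_indicator measurableSet_Ioc]

lemma rpow_subadd {x y κ : ℝ} (hx : 0 ≤ x) (hy : 0 ≤ y) (h0 : 0 ≤ κ) (h1 : κ ≤ 1) :
    (x + y) ^ κ ≤ x ^ κ + y ^ κ := by
  have key : (x + y).toNNReal ^ κ ≤ x.toNNReal ^ κ + y.toNNReal ^ κ := by
    rw [Real.toNNReal_add hx hy]
    exact NNReal.rpow_add_le_add_rpow _ _ h0 h1
  have h2 := NNReal.coe_le_coe.mpr key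
  rw [NNReal.coe_add, NNReal.coe_rpow, NNReal.coe_rpow, NNReal.coe_rpow,
    Real.coe_toNNReal _ (add_nonneg hx hy), Real.coe_toNNReal _ hx,
    Real.coe_toNNReal _ hy] at h2
  exact h2

end Stmt2Aux

open Stmt2Aux in
/-- If `φH ≥ 0` is integrable with `‖φH‖_{L¹} < 1`, `RH` is its resolvent, and
`∫₀^∞ s^κ φH(s) ds < ∞` for some `κ ∈ (0,1)`, then
`∫₀^∞ s^κ RH(s) ds ≤ (∫₀^∞ s^κ φH(s) ds) / (1 - ‖φH‖_{L¹})²`. -/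
theorem stmt2 (φH RH : ℝ → ℝ) (κ : ℝ)
    (hκ0 : 0 < κ) (hκ1 : κ < 1)
    (hφ_nonneg : ∀ t, 0 ≤ φH t)
    (hφ_int : IntegrableOn φH (Ioi 0))
    (hφ_lt : (∫ t in Ioi (0:ℝ), φH t) < 1)
    (hφ_mom : IntegrableOn (fun s => s ^ κ * φH s) (Ioi 0))
    (hR_nonneg : ∀ t, 0 ≤ RH t)
    (hR_meas : Measurable RH)
    (hR_int : IntegrableOn RH (Ioi 0))
    (hres : ∀ t ≥ (0:ℝ), RH t = φH t + ∫ s in (0:ℝ)..t, RH (t - s) * φH s) :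
    (∫ s in Ioi (0:ℝ), s ^ κ * RH s)
      ≤ (∫ s in Ioi (0:ℝ), s ^ κ * φH s) / (1 - ∫ t in Ioi (0:ℝ), φH t) ^ 2 := by
  classical
  have hφm := hφ_int.aestronglyMeasurable.aemeasurable
  obtain ⟨φ₀, hφ₀meas, hφae⟩ : ∃ φ₀ : ℝ → ℝ, Measurable φ₀ ∧
      φH =ᵐ[volume.restrict (Ioi 0)] φ₀ :=
    ⟨hφm.mk φH, hφm.measurable_mk, hφm.ae_eq_mk⟩
  set G : ℝ → ℝ≥0∞ := (fun s => ENNReal.ofReal (RH s)) with hGdef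
  set F : ℝ → ℝ≥0∞ := (fun s => ENNReal.ofReal (φ₀ s)) with hFdef
  have hFmeas : Measurable F := ENNReal.measurable_ofReal.comp hφ₀meas
  have hGmeas : Measurable G := ENNReal.measurable_ofReal.comp hR_meas
  -- the pointwise resolvent inequality in `ℝ≥0∞`
  have hGle : ∀ t : ℝ, 0 < t → G t ≤ ENNReal.ofReal (φH t)
      + ∫⁻ s in Ioc 0 t, G (t - s) * F s := by
    intro t ht
    have hconv : ENNReal.ofReal (∫ s in (0:ℝ)..t, RH (t - s) * φH s)
        ≤ ∫⁻ s in Ioc 0 t, G (t - s) * F s := by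
      rw [intervalIntegral.integral_of_le ht.le]
      have heq : (∫⁻ s in Ioc 0 t, ENNReal.ofReal (RH (t - s) * φH s))
          = ∫⁻ s in Ioc 0 t, G (t - s) * F s := by
        have hres' : φH =ᵐ[volume.restrict (Ioc (0:ℝ) t)] φ₀ :=
          ae_restrict_of_ae_restrict_of_subset Ioc_subset_Ioi_self hφae
        refine lintegral_congr_ae (hres'.mono fun s hs => ?_)
        show ENNReal.ofReal (RH (t - s) * φH s) = G (t - s) * F s
        simp only [hGdef, hFdef]
        rw [ENNReal.ofReal_mul (hR_nonneg _), hs]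
      rw [← heq]
      by_cases hi : IntegrableOn (fun s => RH (t - s) * φH s) (Ioc 0 t) volume
      · rw [← ofReal_integral_eq_lintegral_ofReal hi
          (Filter.Eventually.of_forall fun s => mul_nonneg (hR_nonneg _) (hφ_nonneg _))]
      · rw [integral_undef hi]
        simp
    calc G t = ENNReal.ofReal (φH t + ∫ s in (0:ℝ)..t, RH (t - s) * φH s) := by
          rw [hGdef]; dsimp only; rw [hres t ht.le]
      _ ≤ ENNReal.ofReal (φH t) + ENNReal.ofReal (∫ s in (0:ℝ)..t, RH (t - s) * φH s) :=
          ENNReal.ofReal_add_le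
      _ ≤ _ := add_le_add_right hconv _
  have hrpm : Measurable fun u : ℝ => ENNReal.ofReal (u ^ κ) :=
    ENNReal.measurable_ofReal.comp (Real.continuous_rpow_const hκ0.le).measurable
  set fκ : ℝ → ℝ≥0∞ := (fun u => ENNReal.ofReal (u ^ κ) * G u) with hfκdef
  set gκ : ℝ → ℝ≥0∞ := (fun u => ENNReal.ofReal (u ^ κ) * F u) with hgκdef
  have hfκ : Measurable fκ := hrpm.mul hGmeas
  have hgκ : Measurable gκ := hrpm.mul hFmeas
  -- real-valued nonnegativity facts
  have hAr0 : 0 ≤ ∫ t in Ioi (0:ℝ), φH t :=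
    setIntegral_nonneg measurableSet_Ioi fun t _ => hφ_nonneg t
  have hAκr0 : 0 ≤ ∫ s in Ioi (0:ℝ), s ^ κ * φH s :=
    setIntegral_nonneg measurableSet_Ioi fun s hs =>
      mul_nonneg (Real.rpow_nonneg (le_of_lt hs) κ) (hφ_nonneg s)
  have hBr0 : 0 ≤ ∫ t in Ioi (0:ℝ), RH t :=
    setIntegral_nonneg measurableSet_Ioi fun t _ => hR_nonneg t
  -- identification of the lintegrals with the Bochner integrals
  have hA : (∫⁻ t in Ioi (0:ℝ), F t) = ENNReal.ofReal (∫ t in Ioi (0:ℝ), φH t) := by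
    rw [ofReal_integral_eq_lintegral_ofReal hφ_int (Filter.Eventually.of_forall hφ_nonneg)]
    exact (lintegral_congr_ae (hφae.mono fun x hx => by rw [hFdef]; dsimp only; rw [← hx])).symm
  have hB : (∫⁻ t in Ioi (0:ℝ), G t) = ENNReal.ofReal (∫ t in Ioi (0:ℝ), RH t) :=
    (ofReal_integral_eq_lintegral_ofReal hR_int (Filter.Eventually.of_forall hR_nonneg)).symm
  have hAκ : (∫⁻ t in Ioi (0:ℝ), gκ t)
      = ENNReal.ofReal (∫ s in Ioi (0:ℝ), s ^ κ * φH s) := by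
    rw [ofReal_integral_eq_lintegral_ofReal hφ_mom]
    · refine (lintegral_congr_ae ?_).symm
      filter_upwards [hφae, ae_restrict_mem measurableSet_Ioi] with s hs hs0
      simp only [hgκdef, hFdef]
      rw [ENNReal.ofReal_mul (Real.rpow_nonneg (le_of_lt hs0) κ), hs]
    · filter_upwards [ae_restrict_mem measurableSet_Ioi] with s hs
      exact mul_nonneg (Real.rpow_nonneg (le_of_lt hs) κ) (hφ_nonneg s)
  have hBlt : (∫⁻ t in Ioi (0:ℝ), G t) ≠ ⊤ := by rw [hB]; exact ENNReal.ofReal_ne_top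
  -- subadditivity of `t ↦ t ^ κ`
  have hsub : ∀ t s : ℝ, 0 < s → s ≤ t →
      ENNReal.ofReal (t ^ κ) ≤ ENNReal.ofReal ((t - s) ^ κ) + ENNReal.ofReal (s ^ κ) := by
    intro t s hs hst
    rw [← ENNReal.ofReal_add (Real.rpow_nonneg (by linarith) κ) (Real.rpow_nonneg hs.le κ)]
    apply ENNReal.ofReal_le_ofReal
    have h := rpow_subadd (x := t - s) (y := s) (by linarith) hs.le hκ0.le hκ1.le
    simpa using h
  -- main inequality for the truncated κ-moment of `G`
  have key : ∀ T : ℝ, (∫⁻ t in Ioc (0:ℝ) T, fκ t)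
      ≤ (∫⁻ t in Ioi (0:ℝ), gκ t)
        + ((∫⁻ t in Ioc (0:ℝ) T, fκ t) * (∫⁻ t in Ioi (0:ℝ), F t)
          + (∫⁻ t in Ioi (0:ℝ), G t) * (∫⁻ t in Ioi (0:ℝ), gκ t)) := by
    intro T
    have haconv := conv_measurable fκ F hfκ hFmeas
    have hbconv := conv_measurable G gκ hGmeas hgκ
    have hpt : ∀ᵐ t ∂(volume.restrict (Ioc (0:ℝ) T)),
        fκ t ≤ gκ t + ((∫⁻ s in Ioc 0 t, fκ (t - s) * F s)
          + ∫⁻ s in Ioc 0 t, G (t - s) * gκ s) := by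
      have hae1 : ∀ᵐ t ∂(volume.restrict (Ioc (0:ℝ) T)), φH t = φ₀ t :=
        ae_restrict_of_ae_restrict_of_subset Ioc_subset_Ioi_self hφae
      filter_upwards [hae1, ae_restrict_mem measurableSet_Ioc] with t hteq htmem
      have ht : 0 < t := htmem.1
      have step1 : fκ t ≤ ENNReal.ofReal (t ^ κ)
          * (ENNReal.ofReal (φH t) + ∫⁻ s in Ioc 0 t, G (t - s) * F s) :=
        mul_le_mul_right (hGle t ht) _
      have step2 : ENNReal.ofReal (t ^ κ) * ENNReal.ofReal (φH t) = gκ t := by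
        rw [hteq, hgκdef]
      have step3 : ENNReal.ofReal (t ^ κ) * (∫⁻ s in Ioc 0 t, G (t - s) * F s)
          = ∫⁻ s in Ioc 0 t, ENNReal.ofReal (t ^ κ) * (G (t - s) * F s) :=
        (lintegral_const_mul' _ _ ENNReal.ofReal_ne_top).symm
      have hms : Measurable fun s => fκ (t - s) * F s + G (t - s) * gκ s :=
        ((hfκ.comp (measurable_const.sub measurable_id)).mul hFmeas).add
          ((hGmeas.comp (measurable_const.sub measurable_id)).mul hgκ)
      have step4 : (∫⁻ s in Ioc 0 t, ENNReal.ofReal (t ^ κ) * (G (t - s) * F s))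
          ≤ ∫⁻ s in Ioc 0 t, (fκ (t - s) * F s + G (t - s) * gκ s) := by
        refine setLIntegral_mono hms fun s hs => ?_
        calc ENNReal.ofReal (t ^ κ) * (G (t - s) * F s)
            ≤ (ENNReal.ofReal ((t - s) ^ κ) + ENNReal.ofReal (s ^ κ)) * (G (t - s) * F s) :=
              mul_le_mul_left (hsub t s hs.1 hs.2) _
          _ = fκ (t - s) * F s + G (t - s) * gκ s := by
              rw [hfκdef, hgκdef]; dsimp only; ring
      have step5 : (∫⁻ s in Ioc 0 t, (fκ (t - s) * F s + G (t - s) * gκ s))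
          = (∫⁻ s in Ioc 0 t, fκ (t - s) * F s) + ∫⁻ s in Ioc 0 t, G (t - s) * gκ s :=
        lintegral_add_left ((hfκ.comp (measurable_const.sub measurable_id)).mul hFmeas) _
      calc fκ t ≤ ENNReal.ofReal (t ^ κ)
            * (ENNReal.ofReal (φH t) + ∫⁻ s in Ioc 0 t, G (t - s) * F s) := step1
        _ = gκ t + ENNReal.ofReal (t ^ κ) * (∫⁻ s in Ioc 0 t, G (t - s) * F s) := by
            rw [mul_add, step2]
        _ ≤ gκ t + ((∫⁻ s in Ioc 0 t, fκ (t - s) * F s)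
            + ∫⁻ s in Ioc 0 t, G (t - s) * gκ s) := by
            rw [step3]
            exact add_le_add_right (le_trans step4 (le_of_eq step5)) _
    calc (∫⁻ t in Ioc (0:ℝ) T, fκ t)
        ≤ ∫⁻ t in Ioc (0:ℝ) T, (gκ t + ((∫⁻ s in Ioc 0 t, fκ (t - s) * F s)
            + ∫⁻ s in Ioc 0 t, G (t - s) * gκ s)) := lintegral_mono_ae hpt
      _ = (∫⁻ t in Ioc (0:ℝ) T, gκ t)
          + ((∫⁻ t in Ioc (0:ℝ) T, ∫⁻ s in Ioc 0 t, fκ (t - s) * F s)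
            + ∫⁻ t in Ioc (0:ℝ) T, ∫⁻ s in Ioc 0 t, G (t - s) * gκ s) := by
          rw [lintegral_add_left hgκ, lintegral_add_left haconv]
      _ ≤ (∫⁻ t in Ioi (0:ℝ), gκ t)
          + ((∫⁻ t in Ioc (0:ℝ) T, fκ t) * (∫⁻ t in Ioi (0:ℝ), F t)
            + (∫⁻ t in Ioi (0:ℝ), G t) * (∫⁻ t in Ioi (0:ℝ), gκ t)) := by
          refine add_le_add (lintegral_mono_set Ioc_subset_Ioi_self)
            (add_le_add (conv_le fκ F hfκ hFmeas T) ?_)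
          refine le_trans (conv_le G gκ hGmeas hgκ T) ?_
          exact mul_le_mul_left (lintegral_mono_set Ioc_subset_Ioi_self) _
  -- analogous inequality for the mass of `G`
  have keyB : (∫⁻ t in Ioi (0:ℝ), G t)
      ≤ (∫⁻ t in Ioi (0:ℝ), F t)
        + (∫⁻ t in Ioi (0:ℝ), G t) * (∫⁻ t in Ioi (0:ℝ), F t) := by
    have hBn : ∀ n : ℕ, (∫⁻ t in Ioc (0:ℝ) (n:ℝ), G t)
        ≤ (∫⁻ t in Ioi (0:ℝ), F t)
          + (∫⁻ t in Ioi (0:ℝ), G t) * (∫⁻ t in Ioi (0:ℝ), F t) := ?_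
    · calc (∫⁻ t in Ioi (0:ℝ), G t) = ⨆ n : ℕ, ∫⁻ t in Ioc (0:ℝ) (n:ℝ), G t :=
          sup_Ioc G hGmeas
        _ ≤ _ := iSup_le hBn
    intro n
    have hconvm := conv_measurable G F hGmeas hFmeas
    have hpt : ∀ᵐ t ∂(volume.restrict (Ioc (0:ℝ) (n:ℝ))),
        G t ≤ F t + ∫⁻ s in Ioc 0 t, G (t - s) * F s := by
      have hae1 : ∀ᵐ t ∂(volume.restrict (Ioc (0:ℝ) (n:ℝ))), φH t = φ₀ t :=
        ae_restrict_of_ae_restrict_of_subset Ioc_subset_Ioi_self hφae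
      filter_upwards [hae1, ae_restrict_mem measurableSet_Ioc] with t hteq htmem
      have h := hGle t htmem.1
      rwa [hteq] at h
    calc (∫⁻ t in Ioc (0:ℝ) (n:ℝ), G t)
        ≤ ∫⁻ t in Ioc (0:ℝ) (n:ℝ), (F t + ∫⁻ s in Ioc 0 t, G (t - s) * F s) :=
          lintegral_mono_ae hpt
      _ = (∫⁻ t in Ioc (0:ℝ) (n:ℝ), F t)
          + ∫⁻ t in Ioc (0:ℝ) (n:ℝ), ∫⁻ s in Ioc 0 t, G (t - s) * F s := by
          rw [lintegral_add_left hFmeas]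
      _ ≤ (∫⁻ t in Ioi (0:ℝ), F t)
          + (∫⁻ t in Ioi (0:ℝ), G t) * (∫⁻ t in Ioi (0:ℝ), F t) := by
          refine add_le_add (lintegral_mono_set Ioc_subset_Ioi_self) ?_
          refine le_trans (conv_le G F hGmeas hFmeas _) ?_
          exact mul_le_mul_left (lintegral_mono_set Ioc_subset_Ioi_self) _
  -- real consequence for the mass of `RH`
  have hBr_le : (∫ t in Ioi (0:ℝ), RH t)
      ≤ (∫ t in Ioi (0:ℝ), φH t)
        + (∫ t in Ioi (0:ℝ), RH t) * (∫ t in Ioi (0:ℝ), φH t) := by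
    have h := keyB
    rw [hB, hA, ← ENNReal.ofReal_mul hBr0,
      ← ENNReal.ofReal_add hAr0 (mul_nonneg hBr0 hAr0)] at h
    exact (ENNReal.ofReal_le_ofReal_iff (add_nonneg hAr0 (mul_nonneg hBr0 hAr0))).mp h
  -- finiteness of the truncated moments
  have hmfin : ∀ n : ℕ, (∫⁻ t in Ioc (0:ℝ) (n:ℝ), fκ t) ≠ ⊤ := by
    intro n
    have hle : (∫⁻ t in Ioc (0:ℝ) (n:ℝ), fκ t)
        ≤ ENNReal.ofReal ((n:ℝ) ^ κ) * ∫⁻ t in Ioi (0:ℝ), G t := by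
      have hptw : ∀ t ∈ Ioc (0:ℝ) (n:ℝ), fκ t ≤ ENNReal.ofReal ((n:ℝ) ^ κ) * G t := by
        intro t ht
        exact mul_le_mul_left
          (ENNReal.ofReal_le_ofReal (Real.rpow_le_rpow ht.1.le ht.2 hκ0.le)) _
      refine le_trans (setLIntegral_mono (measurable_const.mul hGmeas) hptw) ?_
      simp only [Pi.mul_apply]
      rw [lintegral_const_mul' _ _ ENNReal.ofReal_ne_top]
      exact mul_le_mul_right (lintegral_mono_set Ioc_subset_Ioi_self) _
    exact ne_top_of_le_ne_top (ENNReal.mul_ne_top ENNReal.ofReal_ne_top hBlt) hle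
  have h1A : 0 < 1 - ∫ t in Ioi (0:ℝ), φH t := by linarith
  -- real bound for the truncated moments
  have hmr : ∀ n : ℕ, (∫⁻ t in Ioc (0:ℝ) (n:ℝ), fκ t)
      ≤ ENNReal.ofReal ((∫ s in Ioi (0:ℝ), s ^ κ * φH s)
        / (1 - ∫ t in Ioi (0:ℝ), φH t) ^ 2) := by
    intro n
    have hm0 : (0:ℝ) ≤ (∫⁻ t in Ioc (0:ℝ) (n:ℝ), fκ t).toReal := ENNReal.toReal_nonneg
    have hmeq : (∫⁻ t in Ioc (0:ℝ) (n:ℝ), fκ t)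
        = ENNReal.ofReal ((∫⁻ t in Ioc (0:ℝ) (n:ℝ), fκ t).toReal) :=
      (ENNReal.ofReal_toReal (hmfin n)).symm
    set m := (∫⁻ t in Ioc (0:ℝ) (n:ℝ), fκ t).toReal
    set Ar := ∫ t in Ioi (0:ℝ), φH t
    set Aκr := ∫ s in Ioi (0:ℝ), s ^ κ * φH s
    set Br := ∫ t in Ioi (0:ℝ), RH t
    have hkey := key (n:ℝ)
    rw [hmeq, hA, hAκ, hB, ← ENNReal.ofReal_mul hm0, ← ENNReal.ofReal_mul hBr0,
      ← ENNReal.ofReal_add (mul_nonneg hm0 hAr0) (mul_nonneg hBr0 hAκr0),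
      ← ENNReal.ofReal_add hAκr0
        (add_nonneg (mul_nonneg hm0 hAr0) (mul_nonneg hBr0 hAκr0))] at hkey
    have hreal : m ≤ Aκr + (m * Ar + Br * Aκr) :=
      (ENNReal.ofReal_le_ofReal_iff
        (add_nonneg hAκr0 (add_nonneg (mul_nonneg hm0 hAr0) (mul_nonneg hBr0 hAκr0)))).mp hkey
    have h6 : m * (1 - Ar) ≤ Aκr * (1 + Br) := by nlinarith
    have h7 : (1 + Br) * (1 - Ar) ≤ 1 := by nlinarith
    have h8 : m * (1 - Ar) ^ 2 ≤ Aκr := by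
      nlinarith [mul_le_mul_of_nonneg_right h6 h1A.le,
        mul_le_mul_of_nonneg_left h7 hAκr0]
    rw [hmeq]
    exact ENNReal.ofReal_le_ofReal ((le_div_iff₀ (by positivity)).mpr h8)
  -- pass to the supremum
  have hsup : (∫⁻ t in Ioi (0:ℝ), fκ t)
      ≤ ENNReal.ofReal ((∫ s in Ioi (0:ℝ), s ^ κ * φH s)
        / (1 - ∫ t in Ioi (0:ℝ), φH t) ^ 2) := by
    rw [sup_Ioc fκ hfκ]
    exact iSup_le hmr
  -- conclude
  have hfinal : (∫ s in Ioi (0:ℝ), s ^ κ * RH s) = (∫⁻ t in Ioi (0:ℝ), fκ t).toReal := by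
    rw [integral_eq_lintegral_of_nonneg_ae ?nn ?meas]
    case nn =>
      filter_upwards [ae_restrict_mem measurableSet_Ioi] with s hs
      exact mul_nonneg (Real.rpow_nonneg (le_of_lt hs) κ) (hR_nonneg s)
    case meas =>
      exact (((Real.continuous_rpow_const hκ0.le).measurable).mul hR_meas).aestronglyMeasurable
    congr 1
    refine lintegral_congr_ae ?_
    filter_upwards [ae_restrict_mem measurableSet_Ioi] with s hs
    rw [ENNReal.ofReal_mul (Real.rpow_nonneg (le_of_lt hs) κ)]
  rw [hfinal]
  refine ENNReal.toReal_le_of_le_ofReal (by positivity) hsup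
end

section
/- Let φ_H, φ_I : [0,∞) → [0,∞) be integrable with ‖φ_H‖_{L¹} < 1, R_H the resolvent of φ_H, and R_I(t) = φ_I(t) + ∫₀ᵗ R_H(t−s)φ_I(s) ds. If ∫₀^∞ s^κ φ_H(s) ds < ∞ and ∫₀^∞ s^κ φ_I(s) ds < ∞ for some κ ∈ (0,1), then ∫₀^∞ s^κ R_I(s) ds ≤ (∫₀^∞ s^κ φ_I(s) ds)/(1 − ‖φ_H‖_{L¹}) + ‖φ_I‖_{L¹} (∫₀^∞ s^κ φ_H(s) ds)/(1 − ‖φ_H‖_{L¹})². -/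
open MeasureTheory Set Filter

open scoped ENNReal

/-- subadditivity of rpow on nonneg reals, exponent in [0,1] -/
lemma aux_rpow_subadd {κ : ℝ} (hκ0 : 0 ≤ κ) (hκ1 : κ ≤ 1) {x y : ℝ} (hx : 0 ≤ x) (hy : 0 ≤ y) :
    (x + y) ^ κ ≤ x ^ κ + y ^ κ := by
  have h := NNReal.rpow_add_le_add_rpow x.toNNReal y.toNNReal hκ0 hκ1
  have h' := NNReal.coe_le_coe.2 h
  push_cast at h'
  rwa [Real.coe_toNNReal x hx, Real.coe_toNNReal y hy] at h'

/-- upper bound of ofReal of a set integral by a lintegral, for pointwise nonneg integrand -/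
lemma aux_ofReal_integral_le {s : Set ℝ} (f : ℝ → ℝ) (hf : ∀ x, 0 ≤ f x) :
    ENNReal.ofReal (∫ x in s, f x) ≤ ∫⁻ x in s, ENNReal.ofReal (f x) := by
  by_cases hi : IntegrableOn f s
  · exact le_of_eq (ofReal_integral_eq_lintegral_ofReal hi (ae_of_all _ hf))
  · rw [integral_undef hi]; simp

noncomputable def econv (F G : ℝ → ℝ≥0∞) : ℝ → ℝ≥0∞ := fun t => ∫⁻ s in Ioc 0 t, F (t - s) * G s

lemma econv_meas {F G : ℝ → ℝ≥0∞} (hF : Measurable F) (hG : Measurable G) :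
    Measurable (econv F G) := by
  have h : ∀ t, econv F G t
      = ∫⁻ s, (fun p : ℝ × ℝ => (Ioc 0 p.1).indicator (fun u => F (p.1 - u) * G u) p.2) (t, s) := by
    intro t
    simp only [econv]
    rw [← lintegral_indicator measurableSet_Ioc]
  rw [show econv F G = fun t => ∫⁻ s, (fun p : ℝ × ℝ =>
      (Ioc 0 p.1).indicator (fun u => F (p.1 - u) * G u) p.2) (t, s) from funext h]
  have hmeas : MeasurableSet {p : ℝ × ℝ | p.2 ∈ Ioc 0 p.1} := by
    apply MeasurableSet.inter
    · exact measurableSet_lt measurable_const measurable_snd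
    · exact measurableSet_le measurable_snd measurable_fst
  have : (fun p : ℝ × ℝ => (Ioc 0 p.1).indicator (fun u => F (p.1 - u) * G u) p.2)
      = fun p : ℝ × ℝ => if p ∈ {p : ℝ × ℝ | p.2 ∈ Ioc 0 p.1} then F (p.1 - p.2) * G p.2 else 0 := by
    ext p
    by_cases hp : p.2 ∈ Ioc 0 p.1
    · rw [Set.indicator_of_mem hp]
      simp only [mem_setOf_eq]
      rw [if_pos hp]
    · rw [Set.indicator_of_notMem hp]
      simp only [mem_setOf_eq]
      rw [if_neg hp]
  have hk : Measurable (fun p : ℝ × ℝ => (Ioc 0 p.1).indicator (fun u => F (p.1 - u) * G u) p.2) := by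
    rw [this]
    exact Measurable.ite hmeas
      ((hF.comp (measurable_fst.sub measurable_snd)).mul (hG.comp measurable_snd)) measurable_const
  exact hk.lintegral_prod_right'

lemma econv_lintegral {F G : ℝ → ℝ≥0∞} (hF : Measurable F) (hG : Measurable G) :
    ∫⁻ t in Ioi (0:ℝ), econv F G t
      = (∫⁻ u in Ioi (0:ℝ), F u) * ∫⁻ s in Ioi (0:ℝ), G s := by
  have hinner : ∀ t : ℝ, econv F G t
      = ∫⁻ s in Ioi (0:ℝ), (Iic t).indicator (fun s => F (t - s) * G s) s := by
    intro t
    rw [lintegral_indicator measurableSet_Iic, Measure.restrict_restrict measurableSet_Iic,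
      inter_comm, Ioi_inter_Iic]
    rfl
  simp_rw [hinner]
  rw [lintegral_lintegral_swap]
  · have houter : ∀ s ∈ Ioi (0:ℝ),
        (∫⁻ t in Ioi (0:ℝ), (Iic t).indicator (fun s => F (t - s) * G s) s)
          = (∫⁻ u in Ioi (0:ℝ), F u) * G s := by
      intro s hs
      have hrw : ∀ t : ℝ, (Iic t).indicator (fun s => F (t - s) * G s) s
          = (Ici s).indicator (fun t => F (t - s)) t * G s := by
        intro t
        by_cases h : s ≤ t
        · rw [Set.indicator_of_mem (mem_Iic.2 h), Set.indicator_of_mem (mem_Ici.2 h)]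
        · rw [Set.indicator_of_notMem (by simpa using h),
            Set.indicator_of_notMem (by simpa using h), zero_mul]
      simp_rw [hrw]
      have hm : Measurable fun t : ℝ => (Ici s).indicator (fun t => F (t - s)) t := by
        exact (hF.comp (measurable_id.sub measurable_const)).indicator measurableSet_Ici
      rw [lintegral_mul_const (G s) hm]
      congr 1
      have hI : Ici s ∩ Ioi (0:ℝ) = Ici s :=
        inter_eq_self_of_subset_left (fun x hx => mem_Ioi.2 (lt_of_lt_of_le hs hx))
      rw [lintegral_indicator measurableSet_Ici, Measure.restrict_restrict measurableSet_Ici,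
        hI, ← lintegral_indicator measurableSet_Ici]
      have hsh : ∀ t : ℝ, (Ici s).indicator (fun t => F (t - s)) t
          = (Ici (0:ℝ)).indicator F (t + -s) := by
        intro t
        by_cases h : s ≤ t
        · rw [Set.indicator_of_mem (mem_Ici.2 h),
            Set.indicator_of_mem (mem_Ici.2 (by linarith))]
          simp [sub_eq_add_neg]
        · rw [Set.indicator_of_notMem (by simpa using h),
            Set.indicator_of_notMem (by simp; linarith [not_le.1 h])]
      simp_rw [hsh]
      rw [lintegral_add_right_eq_self ((Ici (0:ℝ)).indicator F) (-s),
        lintegral_indicator measurableSet_Ici, Measure.restrict_congr_set Ioi_ae_eq_Ici]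
    rw [setLIntegral_congr_fun measurableSet_Ioi houter]
    exact lintegral_const_mul _ hG
  · apply Measurable.aemeasurable
    have : (Function.uncurry fun t s => (Iic t).indicator (fun s => F (t - s) * G s) s)
        = fun p : ℝ × ℝ => if p ∈ {p : ℝ × ℝ | p.2 ≤ p.1} then F (p.1 - p.2) * G p.2 else 0 := by
      ext p
      by_cases hp : p.2 ≤ p.1
      · rw [Function.uncurry]
        rw [Set.indicator_of_mem (mem_Iic.2 hp)]
        simp only [mem_setOf_eq]
        rw [if_pos hp]
      · rw [Function.uncurry]
        rw [Set.indicator_of_notMem (by simpa using hp)]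
        simp only [mem_setOf_eq]
        rw [if_neg hp]
    rw [this]
    exact Measurable.ite (measurableSet_le measurable_snd measurable_fst)
      ((hF.comp (measurable_fst.sub measurable_snd)).mul (hG.comp measurable_snd))
      measurable_const

lemma econv_wk_bound {κ : ℝ} (hκ0 : 0 < κ) (hκ1 : κ ≤ 1) {F G : ℝ → ℝ≥0∞}
    (hF : Measurable F) (hG : Measurable G) {t : ℝ} (ht : 0 < t) :
    ENNReal.ofReal (t ^ κ) * econv F G t
      ≤ econv (fun u => ENNReal.ofReal (u ^ κ) * F u) G t
        + econv F (fun s => ENNReal.ofReal (s ^ κ) * G s) t := by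
  have hwm : Measurable fun u : ℝ => ENNReal.ofReal (u ^ κ) :=
    ENNReal.measurable_ofReal.comp (Real.continuous_rpow_const hκ0.le).measurable
  unfold econv
  rw [← lintegral_const_mul' _ _ ENNReal.ofReal_ne_top]
  have hpt : ∀ s ∈ Ioc (0:ℝ) t,
      ENNReal.ofReal (t ^ κ) * (F (t - s) * G s)
        ≤ (ENNReal.ofReal ((t - s) ^ κ) * F (t - s)) * G s
          + F (t - s) * (ENNReal.ofReal (s ^ κ) * G s) := by
    intro s hs
    have h1 : t ^ κ ≤ (t - s) ^ κ + s ^ κ := by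
      have h2 := aux_rpow_subadd hκ0.le hκ1 (sub_nonneg.2 hs.2) hs.1.le
      rwa [sub_add_cancel] at h2
    calc ENNReal.ofReal (t ^ κ) * (F (t - s) * G s)
        ≤ (ENNReal.ofReal ((t - s) ^ κ) + ENNReal.ofReal (s ^ κ)) * (F (t - s) * G s) := by
          exact mul_le_mul_left ((ENNReal.ofReal_le_ofReal h1).trans ENNReal.ofReal_add_le) _
      _ = (ENNReal.ofReal ((t - s) ^ κ) * F (t - s)) * G s
          + F (t - s) * (ENNReal.ofReal (s ^ κ) * G s) := by ring
  refine le_trans (setLIntegral_mono ?_ hpt) (le_of_eq ?_)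
  · exact (((hwm.comp (measurable_const.sub measurable_id)).mul
      (hF.comp (measurable_const.sub measurable_id))).mul hG).add
      ((hF.comp (measurable_const.sub measurable_id)).mul (hwm.mul hG))
  · exact lintegral_add_left (((hwm.comp (measurable_const.sub measurable_id)).mul
      (hF.comp (measurable_const.sub measurable_id))).mul hG) _

lemma econv_trunc {F G : ℝ → ℝ≥0∞} (hF : Measurable F) (hG : Measurable G) (T : ℝ) :
    ∫⁻ t in Ioc (0:ℝ) T, econv F G t
      ≤ (∫⁻ u in Ioi (0:ℝ), (Iio T).indicator F u) * ∫⁻ s in Ioi (0:ℝ), G s := by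
  have h1 : ∀ t ∈ Ioc (0:ℝ) T, econv F G t = econv ((Iio T).indicator F) G t := by
    intro t ht
    unfold econv
    refine setLIntegral_congr_fun measurableSet_Ioc (fun s hs => ?_)
    rw [Set.indicator_of_mem (mem_Iio.2 (by linarith [hs.1, hs.2, ht.2] : t - s < T))]
  rw [setLIntegral_congr_fun measurableSet_Ioc h1]
  exact le_trans (lintegral_mono_set Ioc_subset_Ioi_self)
    (le_of_eq (econv_lintegral (hF.indicator measurableSet_Iio) hG))

lemma aux_geom {x c a : ℝ≥0∞} (hx : x ≠ ⊤) (ha : a < 1) (h : x ≤ c + x * a) :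
    x ≤ c / (1 - a) := by
  have hD : (1:ℝ≥0∞) - a ≠ 0 := by
    simp only [ne_eq, tsub_eq_zero_iff_le, not_le]
    exact ha
  have hD' : (1:ℝ≥0∞) - a ≠ ⊤ :=
    ne_of_lt (lt_of_le_of_lt tsub_le_self ENNReal.one_lt_top)
  have h1 : x * (1 - a) ≤ c := by
    rw [ENNReal.mul_sub (fun _ _ => hx), mul_one]
    exact tsub_le_iff_right.2 h
  exact (ENNReal.le_div_iff_mul_le (Or.inl hD) (Or.inl hD')).2 h1

lemma aux_res_bound (f ψ R RH : ℝ → ℝ) (hRH_nonneg : ∀ t, 0 ≤ RH t)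
    (hψ_nonneg : ∀ t, 0 ≤ ψ t)
    (hae : f =ᵐ[volume.restrict (Ioi 0)] ψ)
    (hR : ∀ t ≥ (0:ℝ), R t = f t + ∫ s in (0:ℝ)..t, RH (t - s) * f s) :
    ∀ᵐ t ∂(volume.restrict (Ioi 0)), ENNReal.ofReal (R t)
      ≤ ENNReal.ofReal (ψ t)
        + econv (fun u => ENNReal.ofReal (RH u)) (fun u => ENNReal.ofReal (ψ u)) t := by
  have hae' : ∀ t : ℝ, 0 < t → (∫ s in Ioc (0:ℝ) t, RH (t - s) * f s)
      = ∫ s in Ioc (0:ℝ) t, RH (t - s) * ψ s := by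
    intro t ht
    refine integral_congr_ae ?_
    have h2 := ae_restrict_of_ae_restrict_of_subset (Ioc_subset_Ioi_self : Ioc (0:ℝ) t ⊆ Ioi 0)
      (show ∀ᵐ x ∂(volume.restrict (Ioi (0:ℝ))), f x = ψ x from hae)
    filter_upwards [h2] with s hs
    rw [hs]
  filter_upwards [hae, ae_restrict_mem measurableSet_Ioi] with t hft ht
  have ht0 : (0:ℝ) ≤ t := le_of_lt ht
  rw [hR t ht0, intervalIntegral.integral_of_le ht0, hae' t ht, hft]
  calc ENNReal.ofReal (ψ t + ∫ s in Ioc (0:ℝ) t, RH (t - s) * ψ s)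
      ≤ ENNReal.ofReal (ψ t) + ENNReal.ofReal (∫ s in Ioc (0:ℝ) t, RH (t - s) * ψ s) :=
        ENNReal.ofReal_add_le
    _ ≤ _ := by
        refine add_le_add_right ?_ _
        refine le_trans (aux_ofReal_integral_le _
          (fun s => mul_nonneg (hRH_nonneg _) (hψ_nonneg _))) (le_of_eq ?_)
        exact lintegral_congr (fun s => ENNReal.ofReal_mul (hRH_nonneg _))


/-- With `RH` the resolvent of `φH` (`‖φH‖_{L¹} < 1`) and
`RI t = φI t + ∫₀ᵗ RH(t-s) φI s ds`, if the `κ`-th moments of `φH` and `φI` are finite for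
some `κ ∈ (0,1)`, then
`∫₀^∞ s^κ RI(s) ds ≤ (∫₀^∞ s^κ φI)/(1-‖φH‖) + ‖φI‖ (∫₀^∞ s^κ φH)/(1-‖φH‖)²`. -/
theorem stmt3 (φH φI RH RI : ℝ → ℝ) (κ : ℝ)
    (hκ0 : 0 < κ) (hκ1 : κ < 1)
    (hφH_nonneg : ∀ t, 0 ≤ φH t)
    (hφH_int : IntegrableOn φH (Ioi 0))
    (hφH_lt : (∫ t in Ioi (0:ℝ), φH t) < 1)
    (hφH_mom : IntegrableOn (fun s => s ^ κ * φH s) (Ioi 0))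
    (hφI_nonneg : ∀ t, 0 ≤ φI t)
    (hφI_int : IntegrableOn φI (Ioi 0))
    (hφI_mom : IntegrableOn (fun s => s ^ κ * φI s) (Ioi 0))
    (hRH_nonneg : ∀ t, 0 ≤ RH t)
    (hRH_meas : Measurable RH)
    (hRH_int : IntegrableOn RH (Ioi 0))
    (hRH_res : ∀ t ≥ (0:ℝ), RH t = φH t + ∫ s in (0:ℝ)..t, RH (t - s) * φH s)
    (hRI_def : ∀ t ≥ (0:ℝ), RI t = φI t + ∫ s in (0:ℝ)..t, RH (t - s) * φI s) :
    (∫ s in Ioi (0:ℝ), s ^ κ * RI s)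
      ≤ (∫ s in Ioi (0:ℝ), s ^ κ * φI s) / (1 - ∫ t in Ioi (0:ℝ), φH t)
        + (∫ t in Ioi (0:ℝ), φI t) * (∫ s in Ioi (0:ℝ), s ^ κ * φH s)
            / (1 - ∫ t in Ioi (0:ℝ), φH t) ^ 2 := by
  -- real quantities and their signs
  set aR := ∫ t in Ioi (0:ℝ), φH t with haR
  set bR := ∫ t in Ioi (0:ℝ), φI t with hbR
  set AR := ∫ s in Ioi (0:ℝ), s ^ κ * φH s with hAR
  set BR := ∫ s in Ioi (0:ℝ), s ^ κ * φI s with hBR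
  have haR0 : 0 ≤ aR := setIntegral_nonneg measurableSet_Ioi fun x _ => hφH_nonneg x
  have hbR0 : 0 ≤ bR := setIntegral_nonneg measurableSet_Ioi fun x _ => hφI_nonneg x
  have hAR0 : 0 ≤ AR := setIntegral_nonneg measurableSet_Ioi fun x hx =>
    mul_nonneg (Real.rpow_nonneg (le_of_lt hx) κ) (hφH_nonneg x)
  have hBR0 : 0 ≤ BR := setIntegral_nonneg measurableSet_Ioi fun x hx =>
    mul_nonneg (Real.rpow_nonneg (le_of_lt hx) κ) (hφI_nonneg x)
  have hDR : 0 < 1 - aR := by linarith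
  have hRHS0 : 0 ≤ BR / (1 - aR) + bR * AR / (1 - aR) ^ 2 :=
    add_nonneg (div_nonneg hBR0 hDR.le)
      (div_nonneg (mul_nonneg hbR0 hAR0) (pow_nonneg hDR.le 2))
  -- handle the degenerate case
  by_cases hint : IntegrableOn (fun s => s ^ κ * RI s) (Ioi 0)
  swap
  · rw [integral_undef hint]; exact hRHS0
  -- measurable nonneg versions of φH and φI
  have hHm := hφH_int.aemeasurable
  have hIm := hφI_int.aemeasurable
  set ψH : ℝ → ℝ := fun x => max (hHm.mk φH x) 0 with hψHdef
  set ψI : ℝ → ℝ := fun x => max (hIm.mk φI x) 0 with hψIdef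
  have hψH_meas : Measurable ψH := hHm.measurable_mk.max measurable_const
  have hψI_meas : Measurable ψI := hIm.measurable_mk.max measurable_const
  have hψH_nonnneg : ∀ x, 0 ≤ ψH x := fun x => le_max_right _ _
  have hψI_nonnneg : ∀ x, 0 ≤ ψI x := fun x => le_max_right _ _
  have hψH_ae : φH =ᵐ[volume.restrict (Ioi 0)] ψH := by
    filter_upwards [hHm.ae_eq_mk] with x hx
    rw [hψHdef]; simp only [← hx]; rw [max_eq_left (hφH_nonneg x)]
  have hψI_ae : φI =ᵐ[volume.restrict (Ioi 0)] ψI := by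
    filter_upwards [hIm.ae_eq_mk] with x hx
    rw [hψIdef]; simp only [← hx]; rw [max_eq_left (hφI_nonneg x)]
  -- ENNReal-valued functions
  set W : ℝ → ℝ≥0∞ := fun u => ENNReal.ofReal (u ^ κ) with hWdef
  have hW_meas : Measurable W :=
    ENNReal.measurable_ofReal.comp (Real.continuous_rpow_const hκ0.le).measurable
  set RHE : ℝ → ℝ≥0∞ := fun u => ENNReal.ofReal (RH u) with hRHEdef
  have hRHE_meas : Measurable RHE := ENNReal.measurable_ofReal.comp hRH_meas
  set ΨH : ℝ → ℝ≥0∞ := fun u => ENNReal.ofReal (ψH u) with hΨHdef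
  set ΨI : ℝ → ℝ≥0∞ := fun u => ENNReal.ofReal (ψI u) with hΨIdef
  have hΨH_meas : Measurable ΨH := ENNReal.measurable_ofReal.comp hψH_meas
  have hΨI_meas : Measurable ΨI := ENNReal.measurable_ofReal.comp hψI_meas
  -- ENNReal quantities
  set a := ENNReal.ofReal aR with hadef
  set b := ENNReal.ofReal bR with hbdef
  set A := ENNReal.ofReal AR with hAdef
  set B := ENNReal.ofReal BR with hBdef
  have ha1 : a < 1 := ENNReal.ofReal_lt_one.2 hφH_lt
  -- L¹ identities
  have hIa : ∫⁻ t in Ioi (0:ℝ), ΨH t = a := by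
    rw [hadef, haR, ofReal_integral_eq_lintegral_ofReal hφH_int
      ((ae_restrict_iff' measurableSet_Ioi).2 (ae_of_all _ fun x _ => hφH_nonneg x))]
    exact (lintegral_congr_ae (hψH_ae.mono fun x hx => by
      show ENNReal.ofReal (φH x) = ENNReal.ofReal (ψH x); rw [hx])).symm
  have hIb : ∫⁻ t in Ioi (0:ℝ), ΨI t = b := by
    rw [hbdef, hbR, ofReal_integral_eq_lintegral_ofReal hφI_int
      ((ae_restrict_iff' measurableSet_Ioi).2 (ae_of_all _ fun x _ => hφI_nonneg x))]
    exact (lintegral_congr_ae (hψI_ae.mono fun x hx => by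
      show ENNReal.ofReal (φI x) = ENNReal.ofReal (ψI x); rw [hx])).symm
  have hIA : ∫⁻ t in Ioi (0:ℝ), W t * ΨH t = A := by
    rw [hAdef, hAR, ofReal_integral_eq_lintegral_ofReal hφH_mom
      ((ae_restrict_iff' measurableSet_Ioi).2 (ae_of_all _ fun x hx =>
        mul_nonneg (Real.rpow_nonneg (le_of_lt hx) κ) (hφH_nonneg x)))]
    refine (lintegral_congr_ae ?_).symm
    filter_upwards [hψH_ae, ae_restrict_mem measurableSet_Ioi] with x hx hx0
    show ENNReal.ofReal (x ^ κ * φH x) = ENNReal.ofReal (x ^ κ) * ENNReal.ofReal (ψH x)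
    rw [hx, ← ENNReal.ofReal_mul (Real.rpow_nonneg (le_of_lt hx0) κ)]
  have hIB : ∫⁻ t in Ioi (0:ℝ), W t * ΨI t = B := by
    rw [hBdef, hBR, ofReal_integral_eq_lintegral_ofReal hφI_mom
      ((ae_restrict_iff' measurableSet_Ioi).2 (ae_of_all _ fun x hx =>
        mul_nonneg (Real.rpow_nonneg (le_of_lt hx) κ) (hφI_nonneg x)))]
    refine (lintegral_congr_ae ?_).symm
    filter_upwards [hψI_ae, ae_restrict_mem measurableSet_Ioi] with x hx hx0
    show ENNReal.ofReal (x ^ κ * φI x) = ENNReal.ofReal (x ^ κ) * ENNReal.ofReal (ψI x)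
    rw [hx, ← ENNReal.ofReal_mul (Real.rpow_nonneg (le_of_lt hx0) κ)]
  set r := ∫⁻ t in Ioi (0:ℝ), RHE t with hrdef
  have hr_ne : r ≠ ⊤ := by
    rw [hrdef, ← ofReal_integral_eq_lintegral_ofReal hRH_int
      ((ae_restrict_iff' measurableSet_Ioi).2 (ae_of_all _ fun x _ => hRH_nonneg x))]
    exact ENNReal.ofReal_ne_top
  -- resolvent a.e. bounds
  have hRHb : ∀ᵐ t ∂(volume.restrict (Ioi 0)), RHE t ≤ ΨH t + econv RHE ΨH t :=
    aux_res_bound φH ψH RH RH hRH_nonneg hψH_nonnneg hψH_ae hRH_res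
  have hRIb : ∀ᵐ t ∂(volume.restrict (Ioi 0)),
      ENNReal.ofReal (RI t) ≤ ΨI t + econv RHE ΨI t :=
    aux_res_bound φI ψI RI RH hRH_nonneg hψI_nonnneg hψI_ae hRI_def
  -- bound for r
  have hr_bound : r ≤ a / (1 - a) := by
    refine aux_geom hr_ne ha1 ?_
    calc r ≤ ∫⁻ t in Ioi (0:ℝ), (ΨH t + econv RHE ΨH t) := lintegral_mono_ae hRHb
      _ = (∫⁻ t in Ioi (0:ℝ), ΨH t) + ∫⁻ t in Ioi (0:ℝ), econv RHE ΨH t :=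
          lintegral_add_left hΨH_meas _
      _ = a + r * a := by rw [hIa, econv_lintegral hRHE_meas hΨH_meas, hIa, hrdef]
  -- κ-moment of RH
  set MκH : ℝ → ℝ≥0∞ := fun u => W u * RHE u with hMdef
  have hM_meas : Measurable MκH := hW_meas.mul hRHE_meas
  set C := (A + r * A) / (1 - a) with hCdef
  have hXn : ∀ n : ℕ, ∫⁻ t in Ioc (0:ℝ) (n:ℝ), MκH t ≤ C := by
    intro n
    set Xn := ∫⁻ t in Ioc (0:ℝ) (n:ℝ), MκH t with hXndef
    have hXn_ne : Xn ≠ ⊤ := by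
      have h1 : Xn ≤ ENNReal.ofReal ((n:ℝ) ^ κ) * r := by
        calc Xn ≤ ∫⁻ t in Ioc (0:ℝ) (n:ℝ), ENNReal.ofReal ((n:ℝ) ^ κ) * RHE t := by
              refine setLIntegral_mono (measurable_const.mul hRHE_meas) fun t ht => ?_
              exact mul_le_mul_left (ENNReal.ofReal_le_ofReal
                (Real.rpow_le_rpow ht.1.le ht.2 hκ0.le)) _
          _ = ENNReal.ofReal ((n:ℝ) ^ κ) * ∫⁻ t in Ioc (0:ℝ) (n:ℝ), RHE t :=
              lintegral_const_mul' _ _ ENNReal.ofReal_ne_top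
          _ ≤ ENNReal.ofReal ((n:ℝ) ^ κ) * r :=
              mul_le_mul_right (lintegral_mono_set Ioc_subset_Ioi_self) _
      exact ne_top_of_le_ne_top (ENNReal.mul_ne_top ENNReal.ofReal_ne_top hr_ne) h1
    refine aux_geom hXn_ne ha1 ?_
    have hstep : Xn ≤ A + (Xn * a + r * A) := by
      calc Xn ≤ ∫⁻ t in Ioc (0:ℝ) (n:ℝ), W t * (ΨH t + econv RHE ΨH t) := by
            refine lintegral_mono_ae ?_
            filter_upwards [ae_restrict_of_ae_restrict_of_subset Ioc_subset_Ioi_self hRHb]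
              with t ht
            exact mul_le_mul_right ht _
        _ = (∫⁻ t in Ioc (0:ℝ) (n:ℝ), W t * ΨH t)
            + ∫⁻ t in Ioc (0:ℝ) (n:ℝ), W t * econv RHE ΨH t := by
            simp_rw [mul_add]
            exact lintegral_add_left (hW_meas.mul hΨH_meas) _
        _ ≤ A + (Xn * a + r * A) := by
            refine add_le_add ?_ ?_
            · rw [← hIA]; exact lintegral_mono_set Ioc_subset_Ioi_self
            · calc ∫⁻ t in Ioc (0:ℝ) (n:ℝ), W t * econv RHE ΨH t
                  ≤ ∫⁻ t in Ioc (0:ℝ) (n:ℝ),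
                    (econv MκH ΨH t + econv RHE (fun s => W s * ΨH s) t) := by
                    refine setLIntegral_mono ((econv_meas hM_meas hΨH_meas).add
                      (econv_meas hRHE_meas (hW_meas.mul hΨH_meas))) fun t ht => ?_
                    exact econv_wk_bound hκ0 hκ1.le hRHE_meas hΨH_meas ht.1
                _ = (∫⁻ t in Ioc (0:ℝ) (n:ℝ), econv MκH ΨH t)
                    + ∫⁻ t in Ioc (0:ℝ) (n:ℝ), econv RHE (fun s => W s * ΨH s) t :=
                    lintegral_add_left (econv_meas hM_meas hΨH_meas) _
                _ ≤ Xn * a + r * A := by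
                    refine add_le_add ?_ ?_
                    · refine le_trans (econv_trunc hM_meas hΨH_meas (n:ℝ)) ?_
                      rw [hIa]
                      refine mul_le_mul_left ?_ a
                      rw [lintegral_indicator measurableSet_Iio,
                        Measure.restrict_restrict measurableSet_Iio, inter_comm, Ioi_inter_Iio]
                      exact lintegral_mono_set Ioo_subset_Ioc_self
                    · refine le_trans (lintegral_mono_set Ioc_subset_Ioi_self) ?_
                      rw [econv_lintegral (G := fun s => W s * ΨH s) hRHE_meas (hW_meas.mul hΨH_meas), hIA]
    calc Xn ≤ A + (Xn * a + r * A) := hstep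
      _ = (A + r * A) + Xn * a := by ring
  set X := ∫⁻ t in Ioi (0:ℝ), MκH t with hXdef
  have hX : X ≤ C := by
    have hXeq : X = ⨆ n : ℕ, ∫⁻ t in Ioc (0:ℝ) (n:ℝ), MκH t := by
      rw [hXdef, ← lintegral_indicator measurableSet_Ioi]
      have hsup : ∀ t, (Ioi (0:ℝ)).indicator MκH t
          = ⨆ n : ℕ, (Ioc (0:ℝ) (n:ℝ)).indicator MκH t := by
        intro t
        by_cases ht : t ∈ Ioi (0:ℝ)
        · obtain ⟨n, hn⟩ := exists_nat_ge t
          rw [Set.indicator_of_mem ht]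
          refine le_antisymm ?_ (iSup_le fun m => ?_)
          · exact le_iSup_of_le n (le_of_eq (Set.indicator_of_mem (Set.mem_Ioc.2 ⟨Set.mem_Ioi.1 ht, hn⟩) _).symm)
          · exact Set.indicator_le_self _ _ t
        · rw [Set.indicator_of_notMem ht]
          exact (ENNReal.iSup_eq_zero.2 fun m =>
            Set.indicator_of_notMem (fun h => ht h.1) _).symm
      simp_rw [hsup]
      rw [lintegral_iSup (fun m => hM_meas.indicator measurableSet_Ioc)
        (fun m k hmk => indicator_le_indicator_of_subset
          (Ioc_subset_Ioc_right (Nat.cast_le.2 hmk)) (fun x => zero_le))]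
      simp_rw [lintegral_indicator measurableSet_Ioc]
    rw [hXeq]
    exact iSup_le hXn
  -- nonnegativity of RI
  have hRI_nonneg : ∀ t : ℝ, 0 ≤ t → 0 ≤ RI t := by
    intro t ht
    rw [hRI_def t ht]
    exact add_nonneg (hφI_nonneg t) (intervalIntegral.integral_nonneg ht
      (fun u _ => mul_nonneg (hRH_nonneg _) (hφI_nonneg _)))
  have hY0 : ENNReal.ofReal (∫ s in Ioi (0:ℝ), s ^ κ * RI s)
      = ∫⁻ t in Ioi (0:ℝ), ENNReal.ofReal (t ^ κ * RI t) :=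
    ofReal_integral_eq_lintegral_ofReal hint
      ((ae_restrict_iff' measurableSet_Ioi).2 (ae_of_all _ fun x hx =>
        mul_nonneg (Real.rpow_nonneg (le_of_lt hx) κ) (hRI_nonneg x (le_of_lt hx))))
  have hY1 : ∫⁻ t in Ioi (0:ℝ), ENNReal.ofReal (t ^ κ * RI t)
      = ∫⁻ t in Ioi (0:ℝ), W t * ENNReal.ofReal (RI t) := by
    refine lintegral_congr_ae ?_
    filter_upwards [ae_restrict_mem measurableSet_Ioi] with t ht
    exact ENNReal.ofReal_mul (Real.rpow_nonneg (le_of_lt ht) κ)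
  have hY2 : ∫⁻ t in Ioi (0:ℝ), W t * ENNReal.ofReal (RI t) ≤ B + (X * b + r * B) := by
    calc ∫⁻ t in Ioi (0:ℝ), W t * ENNReal.ofReal (RI t)
        ≤ ∫⁻ t in Ioi (0:ℝ), W t * (ΨI t + econv RHE ΨI t) := by
          refine lintegral_mono_ae ?_
          filter_upwards [hRIb] with t ht
          exact mul_le_mul_right ht _
      _ = (∫⁻ t in Ioi (0:ℝ), W t * ΨI t) + ∫⁻ t in Ioi (0:ℝ), W t * econv RHE ΨI t := by
          simp_rw [mul_add]
          exact lintegral_add_left (hW_meas.mul hΨI_meas) _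
      _ ≤ B + (X * b + r * B) := by
          refine add_le_add (le_of_eq hIB) ?_
          calc ∫⁻ t in Ioi (0:ℝ), W t * econv RHE ΨI t
              ≤ ∫⁻ t in Ioi (0:ℝ),
                  (econv MκH ΨI t + econv RHE (fun s => W s * ΨI s) t) := by
                refine setLIntegral_mono ((econv_meas hM_meas hΨI_meas).add
                  (econv_meas hRHE_meas (hW_meas.mul hΨI_meas))) fun t ht => ?_
                exact econv_wk_bound hκ0 hκ1.le hRHE_meas hΨI_meas ht
            _ = (∫⁻ t in Ioi (0:ℝ), econv MκH ΨI t)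
                + ∫⁻ t in Ioi (0:ℝ), econv RHE (fun s => W s * ΨI s) t :=
                lintegral_add_left (econv_meas hM_meas hΨI_meas) _
            _ = X * b + r * B := by
                rw [econv_lintegral hM_meas hΨI_meas, hIb,
                  econv_lintegral (G := fun s => W s * ΨI s) hRHE_meas (hW_meas.mul hΨI_meas), hIB]
  -- final ENNReal arithmetic
  set D := (1 : ℝ≥0∞) - a with hDdef
  have hD0 : D ≠ 0 := by
    rw [hDdef]
    simp only [ne_eq, tsub_eq_zero_iff_le, not_le]
    exact ha1
  have hD' : D ≠ ⊤ := ne_of_lt (lt_of_le_of_lt tsub_le_self ENNReal.one_lt_top)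
  have hone : D + a = 1 := tsub_add_cancel_of_le ha1.le
  have h1r : 1 + r ≤ 1 / D := by
    calc 1 + r ≤ 1 + a / D := add_le_add_right hr_bound 1
      _ = D / D + a / D := by rw [ENNReal.div_self hD0 hD']
      _ = (D + a) / D := ENNReal.div_add_div_same
      _ = 1 / D := by rw [hone]
  have hXfin : X ≤ A / D ^ 2 := by
    calc X ≤ C := hX
      _ = A * (1 + r) / D := by rw [hCdef]; congr 1; ring
      _ ≤ A * (1 / D) / D := ENNReal.div_le_div_right (mul_le_mul_right h1r A) D
      _ = A / D ^ 2 := by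
          rw [div_eq_mul_inv, div_eq_mul_inv, div_eq_mul_inv, one_mul, pow_two,
            ENNReal.mul_inv (Or.inl hD0) (Or.inr hD0), mul_assoc]
  have hfinal : B + (X * b + r * B) ≤ B / D + b * A / D ^ 2 := by
    have hBB : B + r * B ≤ B / D := by
      calc B + r * B = B * (1 + r) := by ring
        _ ≤ B * (1 / D) := mul_le_mul_right h1r B
        _ = B / D := by rw [mul_one_div]
    have hXb : X * b ≤ b * A / D ^ 2 := by
      calc X * b ≤ A / D ^ 2 * b := mul_le_mul_left hXfin b
        _ = b * A / D ^ 2 := by rw [div_eq_mul_inv, div_eq_mul_inv]; ring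
    calc B + (X * b + r * B) = (B + r * B) + X * b := by ring
      _ ≤ B / D + b * A / D ^ 2 := add_le_add hBB hXb
  have hofRHS : ENNReal.ofReal (BR / (1 - aR) + bR * AR / (1 - aR) ^ 2)
      = B / D + b * A / D ^ 2 := by
    rw [ENNReal.ofReal_add (div_nonneg hBR0 hDR.le)
        (div_nonneg (mul_nonneg hbR0 hAR0) (pow_nonneg hDR.le 2)),
      ENNReal.ofReal_div_of_pos hDR, ENNReal.ofReal_div_of_pos (pow_pos hDR 2),
      ENNReal.ofReal_pow hDR.le, ENNReal.ofReal_mul hbR0,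
      ENNReal.ofReal_sub 1 haR0, ENNReal.ofReal_one]
  refine (ENNReal.ofReal_le_ofReal_iff hRHS0).1 ?_
  calc ENNReal.ofReal (∫ s in Ioi (0:ℝ), s ^ κ * RI s)
      = ∫⁻ t in Ioi (0:ℝ), W t * ENNReal.ofReal (RI t) := by rw [hY0, hY1]
    _ ≤ B + (X * b + r * B) := hY2
    _ ≤ B / D + b * A / D ^ 2 := hfinal
    _ = ENNReal.ofReal (BR / (1 - aR) + bR * AR / (1 - aR) ^ 2) := hofRHS.symm
end

section
/- Let φ_H : [0,∞) → [0,∞) be a probability-density-normalizable kernel with ‖φ_H‖_{L¹} < 1 and ∫₀^∞ t^θ φ_H(t) dt < ∞ for some θ > 0, and let R_H be its resolvent. Then there exists a constant C > 0 such that ∫ₜ^∞ R_H(s) ds ≤ C t^{−θ} for all t > 0. -/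
open MeasureTheory Set Filter
open scoped ENNReal

lemma markov_tail (f : ℝ → ℝ) (θ : ℝ) (hθ : 0 < θ) (hf : ∀ t, 0 ≤ f t)
    (hint : IntegrableOn f (Ioi 0))
    (hmom : IntegrableOn (fun t => t ^ θ * f t) (Ioi 0)) :
    ∀ r > (0:ℝ), (∫ s in Ioi r, f s) ≤ r ^ (-θ) * ∫ s in Ioi (0:ℝ), s ^ θ * f s := by
  intro r hr
  have hsub : Ioi r ⊆ Ioi (0:ℝ) := Ioi_subset_Ioi hr.le
  have hmom' : IntegrableOn (fun t => t ^ θ * f t) (Ioi r) := hmom.mono_set hsub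
  have h1 : (∫ s in Ioi r, f s) ≤ ∫ s in Ioi r, r ^ (-θ) * (s ^ θ * f s) := by
    apply setIntegral_mono_on (hint.mono_set hsub) (hmom'.const_mul _) measurableSet_Ioi
    intro s hs
    have hs' : (0:ℝ) < s := hr.trans hs
    have h2 : r ^ θ ≤ s ^ θ := Real.rpow_le_rpow hr.le (le_of_lt hs) hθ.le
    have h3 : (1:ℝ) ≤ r ^ (-θ) * s ^ θ := by
      rw [Real.rpow_neg hr.le, inv_mul_eq_div, le_div_iff₀ (Real.rpow_pos_of_pos hr θ),
        one_mul]
      exact h2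
    calc f s = 1 * f s := (one_mul _).symm
      _ ≤ (r ^ (-θ) * s ^ θ) * f s := mul_le_mul_of_nonneg_right h3 (hf s)
      _ = r ^ (-θ) * (s ^ θ * f s) := by ring
  refine h1.trans ?_
  rw [integral_const_mul]
  apply mul_le_mul_of_nonneg_left _ (Real.rpow_nonneg hr.le _)
  apply setIntegral_mono_set hmom _ (HasSubset.Subset.eventuallyLE hsub)
  filter_upwards [self_mem_ae_restrict measurableSet_Ioi] with s hs
  exact mul_nonneg (Real.rpow_nonneg (le_of_lt hs) _) (hf s)


lemma step_tail (φH RH : ℝ → ℝ)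
    (hφ_nonneg : ∀ t, 0 ≤ φH t)
    (hφ_int : IntegrableOn φH (Ioi 0))
    (hR_nonneg : ∀ t, 0 ≤ RH t)
    (hR_meas : Measurable RH)
    (hR_int : IntegrableOn RH (Ioi 0))
    (hres : ∀ t ≥ (0:ℝ), RH t = φH t + ∫ s in (0:ℝ)..t, RH (t - s) * φH s)
    (a b t : ℝ) (ha : 0 < a) (hb : 0 < b) (hab : a + b = t) :
    (∫ s in Ioi t, RH s) ≤ (∫ s in Ioi t, φH s)
      + (∫ s in Ioi (0:ℝ), φH s) * (∫ s in Ioi a, RH s)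
      + (∫ s in Ioi (0:ℝ), RH s) * (∫ s in Ioi b, φH s) := by
  have ht : 0 < t := by linarith
  have hsubt : Ioi t ⊆ Ioi (0:ℝ) := Ioi_subset_Ioi ht.le
  -- measurable representative of φH on Ioi 0
  have hφae : AEMeasurable φH (volume.restrict (Ioi (0:ℝ))) :=
    hφ_int.aestronglyMeasurable.aemeasurable
  set g : ℝ → ℝ := hφae.mk φH with hg_def
  have hg_meas : Measurable g := hφae.measurable_mk
  have hg_ae : φH =ᵐ[volume.restrict (Ioi (0:ℝ))] g := hφae.ae_eq_mk
  set Φn : ℝ → ℝ≥0∞ := fun s => ENNReal.ofReal (g s) with hΦn_def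
  set Rn : ℝ → ℝ≥0∞ := fun v => ENNReal.ofReal (RH v) with hRn_def
  set Rt : ℝ → ℝ≥0∞ := (Ici (0:ℝ)).indicator Rn with hRt_def
  set S : ℝ → ℝ≥0∞ := (Ioi a).indicator Rn with hS_def
  set Φb : ℝ → ℝ≥0∞ := (Ioi b).indicator Φn with hΦb_def
  have hΦn : Measurable Φn := hg_meas.ennreal_ofReal
  have hRn : Measurable Rn := hR_meas.ennreal_ofReal
  have hRt : Measurable Rt := hRn.indicator measurableSet_Ici
  have hS : Measurable S := hRn.indicator measurableSet_Ioi
  have hΦb : Measurable Φb := hΦn.indicator measurableSet_Ioi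
  set c : ℝ → ℝ := fun u => ∫ s in (0:ℝ)..u, RH (u - s) * φH s with hc_def
  -- resolvent identity on Ioi t
  have K0 : ∀ u ∈ Ioi t, RH u = φH u + c u := fun u hu => hres u (ht.le.trans (le_of_lt hu))
  have hc_nonneg : ∀ u ∈ Ioi t, 0 ≤ c u := by
    intro u hu
    exact intervalIntegral.integral_nonneg (le_of_lt (ht.trans hu))
      (fun s _ => mul_nonneg (hR_nonneg _) (hφ_nonneg _))
  have hc_int : IntegrableOn c (Ioi t) := by
    apply Integrable.congr ((hR_int.mono_set hsubt).sub (hφ_int.mono_set hsubt))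
    filter_upwards [self_mem_ae_restrict measurableSet_Ioi] with u hu
    simp only [Pi.sub_apply]; rw [K0 u hu]; ring
  -- split the tail integral
  have K2 : (∫ s in Ioi t, RH s) = (∫ s in Ioi t, φH s) + ∫ u in Ioi t, c u := by
    rw [← integral_add (hφ_int.mono_set hsubt) hc_int]
    exact setIntegral_congr_fun measurableSet_Ioi K0
  -- pointwise bound on c in ennreal
  have K3 : ∀ u ∈ Ioi t, ENNReal.ofReal (c u) ≤ ∫⁻ s in Ioc 0 u, Rt (u - s) * Φn s := by
    intro u hu
    have hu0 : (0:ℝ) < u := ht.trans hu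
    by_cases hint : IntegrableOn (fun s => RH (u - s) * φH s) (Ioc 0 u)
    · have hc_eq : c u = ∫ s in Ioc 0 u, RH (u - s) * φH s :=
        intervalIntegral.integral_of_le hu0.le
      rw [hc_eq, ofReal_integral_eq_lintegral_ofReal hint
        (ae_of_all _ fun s => mul_nonneg (hR_nonneg _) (hφ_nonneg _))]
      apply le_of_eq
      apply lintegral_congr_ae
      have hgae' : ∀ᵐ s ∂volume.restrict (Ioc 0 u), φH s = g s :=
        ae_restrict_of_ae_restrict_of_subset Ioc_subset_Ioi_self hg_ae
      filter_upwards [hgae', self_mem_ae_restrict measurableSet_Ioc] with s hs1 hs2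
      have hus : u - s ∈ Ici (0:ℝ) := sub_nonneg.2 hs2.2
      rw [ENNReal.ofReal_mul (hR_nonneg _), hs1, hRt_def, Set.indicator_of_mem hus]
    · have : ¬ IntervalIntegrable (fun s => RH (u - s) * φH s) volume 0 u := by
        rw [intervalIntegrable_iff, uIoc_of_le hu0.le]; exact hint
      have : c u = 0 := intervalIntegral.integral_undef this
      rw [this]; simp
  -- pointwise split
  have K4 : ∀ u ∈ Ioi t, ∀ s ∈ Ioc (0:ℝ) u,
      Rt (u - s) * Φn s ≤ S (u - s) * Φn s + Rt (u - s) * Φb s := by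
    intro u hu s hs
    by_cases hsb : b < s
    · have : Φb s = Φn s := Set.indicator_of_mem hsb _
      rw [this]; exact le_add_self
    · push_neg at hsb
      have hus : a < u - s := by
        have : t < u := hu
        linarith
      have h1 : S (u - s) = Rn (u - s) := Set.indicator_of_mem hus _
      have h2 : Rt (u - s) = Rn (u - s) :=
        Set.indicator_of_mem (le_of_lt (ha.trans hus) : (0:ℝ) ≤ u - s) _
      rw [h1, h2]; exact le_add_right le_rfl
  
  -- abbreviations
  set P := ∫ s in Ioi (0:ℝ), φH s with hP_def
  set GA := ∫ s in Ioi a, RH s with hGA_def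
  set R1 := ∫ s in Ioi (0:ℝ), RH s with hR1_def
  set PB := ∫ s in Ioi b, φH s with hPB_def
  have hP0 : 0 ≤ P := setIntegral_nonneg measurableSet_Ioi fun s _ => hφ_nonneg s
  have hGA0 : 0 ≤ GA := setIntegral_nonneg measurableSet_Ioi fun s _ => hR_nonneg s
  have hR10 : 0 ≤ R1 := setIntegral_nonneg measurableSet_Ioi fun s _ => hR_nonneg s
  have hPB0 : 0 ≤ PB := setIntegral_nonneg measurableSet_Ioi fun s _ => hφ_nonneg s
  have hΦt0 : 0 ≤ ∫ s in Ioi t, φH s := setIntegral_nonneg measurableSet_Ioi fun s _ => hφ_nonneg s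
  -- lintegral values
  have hLR : (∫⁻ v, Rt v) = ENNReal.ofReal R1 := by
    rw [hRt_def, lintegral_indicator measurableSet_Ici,
      setLIntegral_congr (Ioi_ae_eq_Ici (a := (0:ℝ))).symm]
    exact (ofReal_integral_eq_lintegral_ofReal hR_int (ae_of_all _ hR_nonneg)).symm
  have hLS : (∫⁻ v, S v) = ENNReal.ofReal GA := by
    rw [hS_def, lintegral_indicator measurableSet_Ioi]
    exact (ofReal_integral_eq_lintegral_ofReal (hR_int.mono_set (Ioi_subset_Ioi ha.le))
      (ae_of_all _ hR_nonneg)).symm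
  have hLΦ : (∫⁻ s in Ioi (0:ℝ), Φn s) = ENNReal.ofReal P := by
    have hcong : (∫⁻ s in Ioi (0:ℝ), Φn s) = ∫⁻ s in Ioi (0:ℝ), ENNReal.ofReal (φH s) := by
      apply lintegral_congr_ae
      filter_upwards [hg_ae] with s h
      rw [hΦn_def]; dsimp only; rw [h]
    rw [hcong]
    exact (ofReal_integral_eq_lintegral_ofReal hφ_int (ae_of_all _ hφ_nonneg)).symm
  have hLΦb : (∫⁻ s in Ioi (0:ℝ), Φb s) = ENNReal.ofReal PB := by
    rw [hΦb_def, lintegral_indicator measurableSet_Ioi,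
      Measure.restrict_restrict measurableSet_Ioi,
      inter_eq_self_of_subset_left (Ioi_subset_Ioi hb.le)]
    have h1 : (∫⁻ s in Ioi b, Φn s) = ∫⁻ s in Ioi b, ENNReal.ofReal (φH s) := by
      apply lintegral_congr_ae
      filter_upwards [ae_restrict_of_ae_restrict_of_subset (Ioi_subset_Ioi hb.le) hg_ae]
        with s h
      rw [hΦn_def]; dsimp only; rw [h]
    rw [h1]
    exact (ofReal_integral_eq_lintegral_ofReal (hφ_int.mono_set (Ioi_subset_Ioi hb.le))
      (ae_of_all _ hφ_nonneg)).symm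
  -- measurability on the product
  have hmeas1 : Measurable (Function.uncurry fun (u s : ℝ) => S (u - s) * Φn s) :=
    (hS.comp (measurable_fst.sub measurable_snd)).mul (hΦn.comp measurable_snd)
  have hmeas2 : Measurable (Function.uncurry fun (u s : ℝ) => Rt (u - s) * Φb s) :=
    (hRt.comp (measurable_fst.sub measurable_snd)).mul (hΦb.comp measurable_snd)
  -- the two swapped terms
  have hterm1 : (∫⁻ u, ∫⁻ s in Ioi (0:ℝ), S (u - s) * Φn s)
      = ENNReal.ofReal P * ENNReal.ofReal GA := by
    rw [lintegral_lintegral_swap hmeas1.aemeasurable]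
    have h2 : ∀ s : ℝ, (∫⁻ u, S (u - s) * Φn s) = ENNReal.ofReal GA * Φn s := by
      intro s
      have hfm : Measurable fun u : ℝ => S (u - s) := hS.comp (measurable_id.sub measurable_const)
      rw [lintegral_mul_const _ hfm]
      congr 1
      calc (∫⁻ u, S (u - s)) = ∫⁻ u, S (u + -s) := by simp only [sub_eq_add_neg]
        _ = ∫⁻ v, S v := lintegral_add_right_eq_self S (-s)
        _ = ENNReal.ofReal GA := hLS
    rw [lintegral_congr h2, lintegral_const_mul _ hΦn, hLΦ, mul_comm]
  have hterm2 : (∫⁻ u, ∫⁻ s in Ioi (0:ℝ), Rt (u - s) * Φb s)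
      = ENNReal.ofReal R1 * ENNReal.ofReal PB := by
    rw [lintegral_lintegral_swap hmeas2.aemeasurable]
    have h2 : ∀ s : ℝ, (∫⁻ u, Rt (u - s) * Φb s) = ENNReal.ofReal R1 * Φb s := by
      intro s
      have hfm : Measurable fun u : ℝ => Rt (u - s) := hRt.comp (measurable_id.sub measurable_const)
      rw [lintegral_mul_const _ hfm]
      congr 1
      calc (∫⁻ u, Rt (u - s)) = ∫⁻ u, Rt (u + -s) := by simp only [sub_eq_add_neg]
        _ = ∫⁻ v, Rt v := lintegral_add_right_eq_self Rt (-s)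
        _ = ENNReal.ofReal R1 := hLR
    rw [lintegral_congr h2, lintegral_const_mul _ hΦb, hLΦb]
  -- the main chain
  have K5 : (∫⁻ u in Ioi t, ENNReal.ofReal (c u))
      ≤ ENNReal.ofReal P * ENNReal.ofReal GA + ENNReal.ofReal R1 * ENNReal.ofReal PB := by
    calc (∫⁻ u in Ioi t, ENNReal.ofReal (c u))
        ≤ ∫⁻ u in Ioi t, ∫⁻ s in Ioc 0 u, Rt (u - s) * Φn s := by
          apply lintegral_mono_ae
          filter_upwards [self_mem_ae_restrict measurableSet_Ioi] with u hu
          exact K3 u hu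
      _ ≤ ∫⁻ u in Ioi t, ∫⁻ s in Ioi 0, (S (u - s) * Φn s + Rt (u - s) * Φb s) := by
          apply lintegral_mono_ae
          filter_upwards [self_mem_ae_restrict measurableSet_Ioi] with u hu
          calc (∫⁻ s in Ioc 0 u, Rt (u - s) * Φn s)
              ≤ ∫⁻ s in Ioc 0 u, (S (u - s) * Φn s + Rt (u - s) * Φb s) := by
                apply lintegral_mono_ae
                filter_upwards [self_mem_ae_restrict measurableSet_Ioc] with s hs
                exact K4 u hu s hs
            _ ≤ _ := lintegral_mono_set Ioc_subset_Ioi_self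
      _ ≤ ∫⁻ u, ∫⁻ s in Ioi 0, (S (u - s) * Φn s + Rt (u - s) * Φb s) :=
          lintegral_mono' Measure.restrict_le_self le_rfl
      _ = (∫⁻ u, ∫⁻ s in Ioi (0:ℝ), S (u - s) * Φn s)
          + ∫⁻ u, ∫⁻ s in Ioi (0:ℝ), Rt (u - s) * Φb s := by
          have hsplit : ∀ u : ℝ, (∫⁻ s in Ioi (0:ℝ), (S (u - s) * Φn s + Rt (u - s) * Φb s))
              = (∫⁻ s in Ioi (0:ℝ), S (u - s) * Φn s)
                + ∫⁻ s in Ioi (0:ℝ), Rt (u - s) * Φb s := fun u =>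
            lintegral_add_left ((hS.comp (measurable_const.sub measurable_id)).mul hΦn) _
          rw [lintegral_congr hsplit]
          exact lintegral_add_left (Measurable.lintegral_prod_right hmeas1) _
      _ = _ := by rw [hterm1, hterm2]
  -- conclude in ℝ
  have final : ENNReal.ofReal (∫ s in Ioi t, RH s)
      ≤ ENNReal.ofReal ((∫ s in Ioi t, φH s) + P * GA + R1 * PB) := by
    rw [K2, ENNReal.ofReal_add hΦt0 (setIntegral_nonneg measurableSet_Ioi hc_nonneg),
      ofReal_integral_eq_lintegral_ofReal hc_int
        ((ae_restrict_iff' measurableSet_Ioi).2 (ae_of_all _ hc_nonneg)),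
      ENNReal.ofReal_add (add_nonneg hΦt0 (mul_nonneg hP0 hGA0)) (mul_nonneg hR10 hPB0),
      ENNReal.ofReal_add hΦt0 (mul_nonneg hP0 hGA0),
      ENNReal.ofReal_mul hP0, ENNReal.ofReal_mul hR10, add_assoc]
    exact add_le_add_right K5 _
  exact (ENNReal.ofReal_le_ofReal_iff
    (add_nonneg (add_nonneg hΦt0 (mul_nonneg hP0 hGA0)) (mul_nonneg hR10 hPB0))).1 final


/-- If `φH ≥ 0` is integrable with `‖φH‖_{L¹} < 1` and finite `θ`-th moment
(`θ > 0`), and `RH` is its resolvent kernel, then there is `C > 0` with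
`∫ₜ^∞ RH(s) ds ≤ C t^{-θ}` for all `t > 0`. -/
theorem stmt8 (φH RH : ℝ → ℝ) (θ : ℝ) (hθ : 0 < θ)
    (hφ_nonneg : ∀ t, 0 ≤ φH t)
    (hφ_int : IntegrableOn φH (Ioi 0))
    (hφ_lt : (∫ t in Ioi (0:ℝ), φH t) < 1)
    (hφ_mom : IntegrableOn (fun t => t ^ θ * φH t) (Ioi 0))
    (hR_nonneg : ∀ t, 0 ≤ RH t)
    (hR_meas : Measurable RH)
    (hR_int : IntegrableOn RH (Ioi 0))
    (hres : ∀ t ≥ (0:ℝ), RH t = φH t + ∫ s in (0:ℝ)..t, RH (t - s) * φH s) :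
    ∃ C > 0, ∀ t > (0:ℝ), (∫ s in Ioi t, RH s) ≤ C * t ^ (-θ) := by
  set P := ∫ t in Ioi (0:ℝ), φH t with hP_def
  set R1 := ∫ t in Ioi (0:ℝ), RH t with hR1_def
  set Mφ := ∫ t in Ioi (0:ℝ), t ^ θ * φH t with hM_def
  have hP0 : 0 ≤ P := setIntegral_nonneg measurableSet_Ioi fun s _ => hφ_nonneg s
  have hR10 : 0 ≤ R1 := setIntegral_nonneg measurableSet_Ioi fun s _ => hR_nonneg s
  have hM0 : 0 ≤ Mφ := setIntegral_nonneg measurableSet_Ioi fun s hs =>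
    mul_nonneg (Real.rpow_nonneg (le_of_lt hs) _) (hφ_nonneg s)
  set β := (P + 1) / 2 with hβ_def
  have hβpos : 0 < β := by rw [hβ_def]; linarith
  have hβ1 : β < 1 := by rw [hβ_def]; linarith
  have hPβ : P < β := by rw [hβ_def]; linarith
  set α := β ^ θ⁻¹ with hα_def
  have hα0 : 0 < α := Real.rpow_pos_of_pos hβpos _
  have hα1 : α < 1 := Real.rpow_lt_one hβpos.le hβ1 (by positivity)
  have hαθ : α ^ θ = β := by
    rw [hα_def, ← Real.rpow_mul hβpos.le, inv_mul_cancel₀ hθ.ne', Real.rpow_one]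
  set q := P / β with hq_def
  have hq0 : 0 ≤ q := div_nonneg hP0 hβpos.le
  have hq1 : q < 1 := (div_lt_one hβpos).2 hPβ
  have markov := markov_tail φH θ hθ hφ_nonneg hφ_int hφ_mom
  set A := Mφ + R1 * ((1 - α) ^ (-θ) * Mφ) with hA_def
  have hA0 : 0 ≤ A := add_nonneg hM0 (mul_nonneg hR10
    (mul_nonneg (Real.rpow_nonneg (by linarith) _) hM0))
  have hGR1 : ∀ r > (0:ℝ), (∫ s in Ioi r, RH s) ≤ R1 := by
    intro r hr
    apply setIntegral_mono_set hR_int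
    · filter_upwards [self_mem_ae_restrict measurableSet_Ioi] with s _
      exact hR_nonneg s
    · exact HasSubset.Subset.eventuallyLE (Ioi_subset_Ioi hr.le)
  have key : ∀ t > (0:ℝ), t ^ θ * (∫ s in Ioi t, RH s)
      ≤ A + q * ((α * t) ^ θ * (∫ s in Ioi (α * t), RH s)) := by
    intro t ht
    have ha : 0 < α * t := mul_pos hα0 ht
    have hb : 0 < (1 - α) * t := mul_pos (by linarith) ht
    have hab : α * t + (1 - α) * t = t := by ring
    have hstep := step_tail φH RH hφ_nonneg hφ_int hR_nonneg hR_meas hR_int hres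
      (α * t) ((1 - α) * t) t ha hb hab
    have htθ : 0 < t ^ θ := Real.rpow_pos_of_pos ht θ
    have hGA0 : 0 ≤ ∫ s in Ioi (α * t), RH s :=
      setIntegral_nonneg measurableSet_Ioi fun s _ => hR_nonneg s
    have e1 : t ^ θ * (∫ s in Ioi t, φH s) ≤ Mφ := by
      calc t ^ θ * (∫ s in Ioi t, φH s) ≤ t ^ θ * (t ^ (-θ) * Mφ) :=
            mul_le_mul_of_nonneg_left (markov t ht) htθ.le
        _ = Mφ := by
            rw [← mul_assoc, ← Real.rpow_add ht, add_neg_cancel, Real.rpow_zero, one_mul]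
    have e3 : t ^ θ * (∫ s in Ioi ((1 - α) * t), φH s) ≤ (1 - α) ^ (-θ) * Mφ := by
      calc t ^ θ * (∫ s in Ioi ((1 - α) * t), φH s)
          ≤ t ^ θ * (((1 - α) * t) ^ (-θ) * Mφ) :=
            mul_le_mul_of_nonneg_left (markov ((1 - α) * t) hb) htθ.le
        _ = (1 - α) ^ (-θ) * Mφ * (t ^ θ * t ^ (-θ)) := by
            rw [Real.mul_rpow (by linarith : (0:ℝ) ≤ 1 - α) ht.le]; ring
        _ = (1 - α) ^ (-θ) * Mφ := by
            rw [← Real.rpow_add ht, add_neg_cancel, Real.rpow_zero, mul_one]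
    have e2 : t ^ θ * (P * (∫ s in Ioi (α * t), RH s))
        = q * ((α * t) ^ θ * (∫ s in Ioi (α * t), RH s)) := by
      have h1 : (α * t) ^ θ = β * t ^ θ := by
        rw [Real.mul_rpow hα0.le ht.le, hαθ]
      rw [h1, hq_def]
      field_simp
    calc t ^ θ * (∫ s in Ioi t, RH s)
        ≤ t ^ θ * ((∫ s in Ioi t, φH s) + P * (∫ s in Ioi (α * t), RH s)
          + R1 * (∫ s in Ioi ((1 - α) * t), φH s)) :=
          mul_le_mul_of_nonneg_left hstep htθ.le
      _ = t ^ θ * (∫ s in Ioi t, φH s) + t ^ θ * (P * (∫ s in Ioi (α * t), RH s))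
          + R1 * (t ^ θ * (∫ s in Ioi ((1 - α) * t), φH s)) := by ring
      _ ≤ Mφ + q * ((α * t) ^ θ * (∫ s in Ioi (α * t), RH s))
          + R1 * ((1 - α) ^ (-θ) * Mφ) :=
          add_le_add (add_le_add e1 (le_of_eq e2)) (mul_le_mul_of_nonneg_left e3 hR10)
      _ = A + q * ((α * t) ^ θ * (∫ s in Ioi (α * t), RH s)) := by rw [hA_def]; ring
  have ind : ∀ n : ℕ, ∀ t > (0:ℝ), t ^ θ * (∫ s in Ioi t, RH s)
      ≤ (∑ k ∈ Finset.range n, q ^ k) * A + (q * β) ^ n * (t ^ θ * R1) := by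
    intro n
    induction n with
    | zero =>
      intro t ht
      simp only [Finset.range_zero, Finset.sum_empty, zero_mul, pow_zero, one_mul, zero_add]
      exact mul_le_mul_of_nonneg_left (hGR1 t ht) (Real.rpow_pos_of_pos ht θ).le
    | succ n ih =>
      intro t ht
      have ha : 0 < α * t := mul_pos hα0 ht
      calc t ^ θ * (∫ s in Ioi t, RH s)
          ≤ A + q * ((α * t) ^ θ * (∫ s in Ioi (α * t), RH s)) := key t ht
        _ ≤ A + q * ((∑ k ∈ Finset.range n, q ^ k) * A + (q * β) ^ n * ((α * t) ^ θ * R1)) :=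
            add_le_add_right (mul_le_mul_of_nonneg_left (ih (α * t) ha) hq0) A
        _ = (∑ k ∈ Finset.range (n + 1), q ^ k) * A + (q * β) ^ (n + 1) * (t ^ θ * R1) := by
            rw [geom_sum_succ]
            have h1 : (α * t) ^ θ = β * t ^ θ := by
              rw [Real.mul_rpow hα0.le ht.le, hαθ]
            rw [h1]; ring
  have hqlo : 0 < 1 - q := by linarith
  have hC0 : 0 ≤ A / (1 - q) := div_nonneg hA0 hqlo.le
  refine ⟨A / (1 - q) + 1, by linarith, ?_⟩
  intro t ht
  have htθ : 0 < t ^ θ := Real.rpow_pos_of_pos ht θ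
  have hqβ0 : 0 ≤ q * β := mul_nonneg hq0 hβpos.le
  have hqβ1 : q * β < 1 := lt_of_le_of_lt (mul_le_of_le_one_right hq0 hβ1.le) hq1
  have hlim : Tendsto (fun n : ℕ => (∑ k ∈ Finset.range n, q ^ k) * A
      + (q * β) ^ n * (t ^ θ * R1)) atTop (nhds ((1 - q)⁻¹ * A + 0 * (t ^ θ * R1))) := by
    apply Tendsto.add
    · exact ((hasSum_geometric_of_lt_one hq0 hq1).tendsto_sum_nat).mul_const A
    · exact (tendsto_pow_atTop_nhds_zero_of_lt_one hqβ0 hqβ1).mul_const _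
  have hg : t ^ θ * (∫ s in Ioi t, RH s) ≤ (1 - q)⁻¹ * A + 0 * (t ^ θ * R1) :=
    ge_of_tendsto' hlim fun n => ind n t ht
  rw [zero_mul, add_zero] at hg
  have hfin : (∫ s in Ioi t, RH s) = t ^ (-θ) * (t ^ θ * (∫ s in Ioi t, RH s)) := by
    rw [← mul_assoc, ← Real.rpow_add ht, neg_add_cancel, Real.rpow_zero, one_mul]
  rw [hfin]
  calc t ^ (-θ) * (t ^ θ * (∫ s in Ioi t, RH s))
      ≤ t ^ (-θ) * ((1 - q)⁻¹ * A) :=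
        mul_le_mul_of_nonneg_left hg (Real.rpow_nonneg ht.le _)
    _ ≤ (A / (1 - q) + 1) * t ^ (-θ) := by
        rw [mul_comm]
        apply mul_le_mul_of_nonneg_right _ (Real.rpow_nonneg ht.le _)
        rw [inv_mul_eq_div]
        linarith
end
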